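/- For every tree T, the following equalities hold: ξ(T) + η(T) = α(T), σ(T) + η(T) = μ(T), and ξ(T) + 2η(T) + σ(T) = |V(T)|. -/

import Mathlib

/-!
Let `u` be a leaf of a forest with neighbour `w`, and delete all edges at `w`. In the smaller
forest `u` and `w` are isolated, and its maximum stable sets are exactly the sets `S ∪ {u, w}`
with `S` maximum stable in the original one (exactly one of `u`, `w` lies in such an `S`). Hence
`α` and `μ` both grow by one, `core` gains `u` and `w`, and `w` leaves the anticore. The only
α-critical edge that can be lost is `uw`, and it is α-critical exactly when `u ∉ core`. In either
case the three identities pass from the smaller forest to the larger one, and for an edgeless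
graph they read `|V| + 0 = |V|`, `0 + 0 = 0`, `|V| + 0 + 0 = |V|`.
-/
open scoped Classical

namespace KEG

variable {V : Type*}

/-- `S` is a stable (independent) set of vertices of `G`. -/
def IsStable (G : SimpleGraph V) (S : Finset V) : Prop :=
  ∀ ⦃x⦄, x ∈ S → ∀ ⦃y⦄, y ∈ S → ¬G.Adj x y

/-- The stability number `α(G)`: maximum cardinality of a stable set. -/
noncomputable def alphaNum (G : SimpleGraph V) : ℕ :=
  sSup {n | ∃ S : Finset V, IsStable G S ∧ S.card = n}

/-- `S` is a maximum stable set of `G`. -/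
def IsMaxStable (G : SimpleGraph V) (S : Finset V) : Prop :=
  IsStable G S ∧ S.card = alphaNum G

/-- `M` is a matching of `G`: a set of edges of `G`, pairwise non-incident. -/
def IsMatching (G : SimpleGraph V) (M : Finset (Sym2 V)) : Prop :=
  (∀ e ∈ M, e ∈ G.edgeSet) ∧
    ∀ e ∈ M, ∀ f ∈ M, e ≠ f → ∀ v : V, v ∈ e → v ∉ f

/-- The matching number `μ(G)`: maximum cardinality of a matching. -/
noncomputable def muNum (G : SimpleGraph V) : ℕ :=
  sSup {n | ∃ M : Finset (Sym2 V), IsMatching G M ∧ M.card = n}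

/-- A perfect matching: a matching covering every vertex. -/
def IsPerfectMatching (G : SimpleGraph V) (M : Finset (Sym2 V)) : Prop :=
  IsMatching G M ∧ ∀ v : V, ∃ e ∈ M, v ∈ e

/-- A maximal matching: a matching such that no edge of `G` can be added to it
while keeping pairwise non-incidence, i.e. every edge of `G` outside `M` is
incident to an edge of `M`. -/
def IsMaximalMatching (G : SimpleGraph V) (M : Finset (Sym2 V)) : Prop :=
  IsMatching G M ∧ ∀ e ∈ G.edgeSet, e ∉ M → ∃ f ∈ M, ∃ v : V, v ∈ e ∧ v ∈ f

/-- `G` is a König-Egerváry graph: `α(G) + μ(G) = |V(G)|`. -/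
def KonigEgervary (G : SimpleGraph V) [Fintype V] : Prop :=
  alphaNum G + muNum G = Fintype.card V

/-- `e` is an α-critical edge of `G`: `α(G - e) > α(G)`. -/
def IsAlphaCritical (G : SimpleGraph V) (e : Sym2 V) : Prop :=
  e ∈ G.edgeSet ∧ alphaNum G < alphaNum (G.deleteEdges {e})

/-- `e` is a μ-critical edge of `G`: `μ(G - e) < μ(G)`. -/
def IsMuCritical (G : SimpleGraph V) (e : Sym2 V) : Prop :=
  e ∈ G.edgeSet ∧ muNum (G.deleteEdges {e}) < muNum G

/-- `core(G)`: the set of vertices belonging to every maximum stable set of `G`. -/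
def core (G : SimpleGraph V) : Set V :=
  {v | ∀ S : Finset V, IsMaxStable G S → v ∈ S}

/-- `ξ(G) = |core(G)|`. -/
noncomputable def xi (G : SimpleGraph V) : ℕ := (core G).ncard

/-- `σ(G)`: the number of vertices belonging to no maximum stable set of `G`. -/
noncomputable def sigmaNum (G : SimpleGraph V) : ℕ :=
  {v : V | ∀ S : Finset V, IsMaxStable G S → v ∉ S}.ncard

/-- `η(G)`: the number of α-critical edges of `G`. -/
noncomputable def eta (G : SimpleGraph V) : ℕ :=
  {e : Sym2 V | IsAlphaCritical G e}.ncard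

/-- `N(A)`: the set of vertices adjacent to some vertex of `A`. -/
def nbhd (G : SimpleGraph V) (A : Set V) : Set V :=
  {v | ∃ a ∈ A, G.Adj a v}

/-- `N[A] = A ∪ N(A)`: the closed neighborhood of `A`. -/
def closedNbhd (G : SimpleGraph V) (A : Set V) : Set V :=
  A ∪ nbhd G A

theorem _root_.SimpleGraph.IsAcyclic.exists_pendant [Finite V] {G : SimpleGraph V}
    (hG : G.IsAcyclic) (hne : G ≠ ⊥) : ∃ u w : V, ∀ z, G.Adj u z ↔ z = w := by
  obtain ⟨x, y, hxy⟩ := SimpleGraph.ne_bot_iff_exists_adj.1 hne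
  have : Nonempty V := ⟨x⟩
  -- `u` is an end of a longest path `p`
  obtain ⟨u, v, p, hp, hlongest⟩ :=
    SimpleGraph.Walk.exists_isPath_forall_isPath_length_le_length G
  have hnil : ¬p.Nil := SimpleGraph.Walk.not_nil_iff_lt_length.2 <|
    (hlongest _ _ _ (SimpleGraph.Path.singleton hxy).2).trans_lt' Nat.one_pos
  refine ⟨u, p.snd, fun z => ⟨fun huz => hG.eq_snd_of_adj_start hp huz ?_, ?_⟩⟩
  · by_contra hz
    have := hlongest _ _ _ (hp.cons (h := huz.symm) hz)
    simp at this
  · rintro rfl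
    exact p.adj_snd hnil

section Stable

variable {G H : SimpleGraph V} {S : Finset V} {v : V}

theorem isStable_insert : IsStable G (insert v S) ↔ IsStable G S ∧ ∀ x ∈ S, ¬G.Adj v x := by
  refine ⟨fun h => ⟨fun x hx y hy => ?_, fun x hx => ?_⟩, ?_⟩
  · exact h (Finset.mem_insert_of_mem hx) (Finset.mem_insert_of_mem hy)
  · exact h (Finset.mem_insert_self v S) (Finset.mem_insert_of_mem hx)
  rintro ⟨hS, hv⟩ x hx y hy
  rw [Finset.mem_insert] at hx hy
  rcases hx with rfl | hx <;> rcases hy with rfl | hy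
  exacts [G.irrefl, hv y hy, fun h => hv x hx h.symm, hS hx hy]

theorem IsStable.anti (hGH : G ≤ H) (hS : IsStable H S) : IsStable G S :=
  fun _ hx _ hy hxy => hS hx hy (hGH hxy)

theorem IsStable.erase_of_deleteEdges {s : Set (Sym2 V)} (hS : IsStable (G.deleteEdges s) S)
    (hv : ∀ e ∈ s, v ∈ e) : IsStable G (S.erase v) := by
  intro x hx y hy hxy
  rw [Finset.mem_erase] at hx hy
  refine hS hx.2 hy.2 (SimpleGraph.deleteEdges_adj.2 ⟨hxy, fun he => ?_⟩)
  rcases Sym2.mem_iff.1 (hv _ he) with rfl | rfl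
  exacts [hx.1 rfl, hy.1 rfl]

theorem nonempty_stableCards (G : SimpleGraph V) :
    {n | ∃ S : Finset V, IsStable G S ∧ S.card = n}.Nonempty :=
  ⟨0, ∅, by simp [IsStable], rfl⟩

theorem alphaNum_le {n : ℕ} (h : ∀ S, IsStable G S → S.card ≤ n) : alphaNum G ≤ n :=
  csSup_le (nonempty_stableCards G) (by rintro m ⟨S, hS, rfl⟩; exact h S hS)

variable [Fintype V]

theorem bddAbove_stableCards (G : SimpleGraph V) :
    BddAbove {n | ∃ S : Finset V, IsStable G S ∧ S.card = n} :=
  ⟨Fintype.card V, by rintro n ⟨S, -, rfl⟩; exact S.card_le_univ⟩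

theorem IsStable.card_le_alphaNum (hS : IsStable G S) : S.card ≤ alphaNum G :=
  le_csSup (bddAbove_stableCards G) ⟨S, hS, rfl⟩

theorem exists_isMaxStable (G : SimpleGraph V) : ∃ S, IsMaxStable G S :=
  Nat.sSup_mem (nonempty_stableCards G) (bddAbove_stableCards G)

theorem IsMaxStable.mem_of_isStable_insert (hS : IsMaxStable G S)
    (h : IsStable G (insert v S)) : v ∈ S := by
  by_contra hvS
  have := h.card_le_alphaNum
  rw [Finset.card_insert_of_notMem hvS, hS.2] at this
  omega

theorem IsMaxStable.mem_of_forall_not_adj (hS : IsMaxStable G S) (hv : ∀ z, ¬G.Adj v z) :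
    v ∈ S :=
  hS.mem_of_isStable_insert (isStable_insert.2 ⟨hS.1, fun x _ => hv x⟩)

end Stable

section Matching

variable {G H : SimpleGraph V} {M N : Finset (Sym2 V)}

theorem IsMatching.mono (hGH : G ≤ H) (hM : IsMatching G M) : IsMatching H M :=
  ⟨fun e he => SimpleGraph.edgeSet_mono hGH (hM.1 e he), hM.2⟩

theorem IsMatching.subset (hM : IsMatching G M) (hNM : N ⊆ M) : IsMatching G N :=
  ⟨fun e he => hM.1 e (hNM he), fun e he f hf => hM.2 e (hNM he) f (hNM hf)⟩

theorem IsMatching.insert {e : Sym2 V} (hM : IsMatching G M) (he : e ∈ G.edgeSet)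
    (hdisj : ∀ f ∈ M, ∀ v ∈ e, v ∉ f) : IsMatching G (insert e M) := by
  refine ⟨fun f hf => ?_, fun f hf g hg hfg v hvf => ?_⟩
  · rcases Finset.mem_insert.1 hf with rfl | hf
    exacts [he, hM.1 f hf]
  · rcases Finset.mem_insert.1 hf with rfl | hfM <;> rcases Finset.mem_insert.1 hg with rfl | hgM
    exacts [absurd rfl hfg, hdisj g hgM v hvf, fun hvg => hdisj f hfM v hvg hvf,
      hM.2 f hfM g hgM hfg v hvf]

theorem IsMatching.card_filter_mem_le_one (hM : IsMatching G M) (w : V) :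
    (M.filter (w ∈ ·)).card ≤ 1 := by
  refine Finset.card_le_one.2 fun e he f hf => by_contra fun hef => ?_
  rw [Finset.mem_filter] at he hf
  exact hM.2 e he.1 f hf.1 hef w he.2 hf.2

theorem IsMatching.filter_notMem_deleteIncidenceSet (hM : IsMatching G M) (w : V) :
    IsMatching (G.deleteIncidenceSet w) (M.filter (w ∉ ·)) := by
  refine ⟨fun e he => ?_, (hM.subset (Finset.filter_subset _ M)).2⟩
  rw [Finset.mem_filter] at he
  rw [SimpleGraph.edgeSet_deleteIncidenceSet]
  exact ⟨hM.1 e he.1, fun h => he.2 h.2⟩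

theorem nonempty_matchingCards (G : SimpleGraph V) :
    {n | ∃ M : Finset (Sym2 V), IsMatching G M ∧ M.card = n}.Nonempty :=
  ⟨0, ∅, by simp [IsMatching], rfl⟩

theorem muNum_le {n : ℕ} (h : ∀ M, IsMatching G M → M.card ≤ n) : muNum G ≤ n :=
  csSup_le (nonempty_matchingCards G) (by rintro m ⟨M, hM, rfl⟩; exact h M hM)

variable [Fintype V]

theorem bddAbove_matchingCards (G : SimpleGraph V) :
    BddAbove {n | ∃ M : Finset (Sym2 V), IsMatching G M ∧ M.card = n} :=
  ⟨Fintype.card (Sym2 V), by rintro n ⟨M, -, rfl⟩; exact M.card_le_univ⟩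

theorem IsMatching.card_le_muNum (hM : IsMatching G M) : M.card ≤ muNum G :=
  le_csSup (bddAbove_matchingCards G) ⟨M, hM, rfl⟩

theorem exists_isMatching_card_eq_muNum (G : SimpleGraph V) :
    ∃ M, IsMatching G M ∧ M.card = muNum G :=
  Nat.sSup_mem (nonempty_matchingCards G) (bddAbove_matchingCards G)

end Matching

def anticore (G : SimpleGraph V) : Set V :=
  {v | ∀ S : Finset V, IsMaxStable G S → v ∉ S}

theorem sigmaNum_eq_ncard_anticore (G : SimpleGraph V) : sigmaNum G = (anticore G).ncard := rfl

def XiEtaSigmaIdentities [Fintype V] (G : SimpleGraph V) : Prop :=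
  xi G + eta G = alphaNum G ∧ sigmaNum G + eta G = muNum G ∧
    xi G + 2 * eta G + sigmaNum G = Fintype.card V

section Edgeless

theorem eta_bot : eta (⊥ : SimpleGraph V) = 0 := by
  have : {e | IsAlphaCritical (⊥ : SimpleGraph V) e} = ∅ :=
    Set.eq_empty_of_forall_notMem fun e he => by simpa using he.1
  rw [eta, this, Set.ncard_empty]

theorem muNum_bot : muNum (⊥ : SimpleGraph V) = 0 :=
  Nat.le_zero.1 <| muNum_le fun M hM => by
    rw [Nat.le_zero, Finset.card_eq_zero, Finset.eq_empty_iff_forall_notMem]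
    exact fun e he => by simpa using hM.1 e he

variable [Fintype V]

theorem alphaNum_bot : alphaNum (⊥ : SimpleGraph V) = Fintype.card V :=
  le_antisymm (alphaNum_le fun S _ => S.card_le_univ)
    (Finset.card_univ (α := V) ▸ IsStable.card_le_alphaNum fun _ _ _ _ h => h)

theorem IsMaxStable.eq_univ_of_bot {S : Finset V} (hS : IsMaxStable (⊥ : SimpleGraph V) S) :
    S = Finset.univ :=
  (Finset.card_eq_iff_eq_univ S).1 (hS.2.trans alphaNum_bot)

theorem xi_bot : xi (⊥ : SimpleGraph V) = Fintype.card V := by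
  have : core (⊥ : SimpleGraph V) = Set.univ :=
    Set.eq_univ_of_forall fun v S hS => hS.eq_univ_of_bot ▸ Finset.mem_univ v
  rw [xi, this, Set.ncard_univ, Nat.card_eq_fintype_card]

theorem sigmaNum_bot : sigmaNum (⊥ : SimpleGraph V) = 0 := by
  obtain ⟨S, hS⟩ := exists_isMaxStable (⊥ : SimpleGraph V)
  have : anticore (⊥ : SimpleGraph V) = ∅ :=
    Set.eq_empty_of_forall_notMem fun v hv => hv S hS (hS.eq_univ_of_bot ▸ Finset.mem_univ v)
  rw [sigmaNum_eq_ncard_anticore, this, Set.ncard_empty]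

end Edgeless

theorem notMem_of_mem_edgeSet {G : SimpleGraph V} {v : V} (hv : ∀ z, ¬G.Adj v z) {e : Sym2 V}
    (he : e ∈ G.edgeSet) : v ∉ e := by
  induction e using Sym2.ind with
  | h x y =>
    rw [Sym2.mem_iff]
    rintro (rfl | rfl)
    exacts [hv _ he, hv _ (G.adj_symm he)]

theorem not_adj_deleteIncidenceSet {G : SimpleGraph V} {w : V} (z : V) :
    ¬(G.deleteIncidenceSet w).Adj w z :=
  fun h => (SimpleGraph.deleteIncidenceSet_adj.1 h).2.1 rfl

theorem deleteIncidenceSet_lt {G : SimpleGraph V} {u w : V} (huw : G.Adj u w) :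
    G.deleteIncidenceSet w < G :=
  (G.deleteIncidenceSet_le w).lt_of_ne fun h =>
    not_adj_deleteIncidenceSet u (h.symm ▸ huw.symm : (G.deleteIncidenceSet w).Adj w u)

theorem deleteIncidenceSet_deleteEdges_of_mem {G : SimpleGraph V} {w : V} {e : Sym2 V}
    (hwe : w ∈ e) : (G.deleteEdges {e}).deleteIncidenceSet w = G.deleteIncidenceSet w := by
  ext x y
  simp only [SimpleGraph.deleteIncidenceSet_adj, SimpleGraph.deleteEdges_adj,
    Set.mem_singleton_iff]
  refine ⟨fun ⟨⟨h, _⟩, hx, hy⟩ => ⟨h, hx, hy⟩, fun ⟨h, hx, hy⟩ => ⟨⟨h, ?_⟩, hx, hy⟩⟩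
  rintro rfl
  rcases Sym2.mem_iff.1 hwe with rfl | rfl
  exacts [hx rfl, hy rfl]

theorem deleteIncidenceSet_deleteEdges {G : SimpleGraph V} {w : V} {e : Sym2 V} :
    (G.deleteEdges {e}).deleteIncidenceSet w = (G.deleteIncidenceSet w).deleteEdges {e} := by
  ext x y
  simp only [SimpleGraph.deleteIncidenceSet_adj, SimpleGraph.deleteEdges_adj]
  tauto

section Pendant

variable {G : SimpleGraph V} {u w : V} (hu : ∀ z, G.Adj u z ↔ z = w) {S : Finset V}

include hu

theorem not_adj_deleteIncidenceSet_of_pendant (z : V) : ¬(G.deleteIncidenceSet w).Adj u z :=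
  fun h => have h' := SimpleGraph.deleteIncidenceSet_adj.1 h; h'.2.2 ((hu z).1 h'.1)

theorem pendant_deleteEdges {e : Sym2 V} (he : e ≠ s(u, w)) :
    ∀ z, (G.deleteEdges {e}).Adj u z ↔ z = w := by
  intro z
  rw [SimpleGraph.deleteEdges_adj, hu, Set.mem_singleton_iff]
  exact ⟨And.left, by rintro rfl; exact ⟨rfl, fun h => he h.symm⟩⟩

theorem isStable_deleteIncidenceSet_insert_insert (hS : IsStable G S) :
    IsStable (G.deleteIncidenceSet w) (insert u (insert w S)) :=
  isStable_insert.2 ⟨isStable_insert.2 ⟨hS.anti (G.deleteIncidenceSet_le w),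
    fun x _ => not_adj_deleteIncidenceSet x⟩,
    fun x _ => not_adj_deleteIncidenceSet_of_pendant hu x⟩

variable [Fintype V]

theorem IsMaxStable.mem_iff_notMem_of_pendant (hS : IsMaxStable G S) : u ∈ S ↔ w ∉ S :=
  ⟨fun huS hwS => hS.1 huS hwS ((hu w).2 rfl), fun hwS => hS.mem_of_isStable_insert
    (isStable_insert.2 ⟨hS.1, fun x hx hux => hwS ((hu x).1 hux ▸ hx)⟩)⟩

theorem IsMaxStable.card_insert_insert_of_pendant (hS : IsMaxStable G S) :
    (insert u (insert w S)).card = alphaNum G + 1 := by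
  by_cases hwS : w ∈ S
  · have huS : u ∉ S := fun h => (hS.mem_iff_notMem_of_pendant hu).1 h hwS
    rw [Finset.insert_eq_of_mem hwS, Finset.card_insert_of_notMem huS, hS.2]
  · rw [Finset.insert_eq_of_mem (Finset.mem_insert_of_mem
      ((hS.mem_iff_notMem_of_pendant hu).2 hwS)), Finset.card_insert_of_notMem hwS, hS.2]

theorem alphaNum_deleteIncidenceSet : alphaNum (G.deleteIncidenceSet w) = alphaNum G + 1 := by
  refine le_antisymm (alphaNum_le fun S' hS' => ?_) ?_
  · have := (hS'.erase_of_deleteEdges fun e he => he.2).card_le_alphaNum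
    have := Finset.pred_card_le_card_erase (s := S') (a := w)
    omega
  · obtain ⟨S, hS⟩ := exists_isMaxStable G
    exact hS.card_insert_insert_of_pendant hu ▸
      (isStable_deleteIncidenceSet_insert_insert hu hS.1).card_le_alphaNum

theorem IsMaxStable.insert_insert_deleteIncidenceSet (hS : IsMaxStable G S) :
    IsMaxStable (G.deleteIncidenceSet w) (insert u (insert w S)) :=
  ⟨isStable_deleteIncidenceSet_insert_insert hu hS.1, by
    rw [hS.card_insert_insert_of_pendant hu, alphaNum_deleteIncidenceSet hu]⟩

theorem IsMaxStable.erase_of_deleteIncidenceSet (hS : IsMaxStable (G.deleteIncidenceSet w) S) :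
    IsMaxStable G (S.erase w) :=
  ⟨hS.1.erase_of_deleteEdges fun e he => he.2, by
    rw [Finset.card_erase_of_mem (hS.mem_of_forall_not_adj not_adj_deleteIncidenceSet), hS.2,
      alphaNum_deleteIncidenceSet hu, Nat.add_sub_cancel]⟩

theorem notMem_core_of_pendant : w ∉ core G := fun hw => by
  obtain ⟨S, hS⟩ := exists_isMaxStable (G.deleteIncidenceSet w)
  exact Finset.notMem_erase w S (hw _ (hS.erase_of_deleteIncidenceSet hu))

theorem core_deleteIncidenceSet :
    core (G.deleteIncidenceSet w) = insert u (insert w (core G)) := by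
  ext v
  simp only [Set.mem_insert_iff]
  refine ⟨fun hv => ?_, ?_⟩
  · by_contra! h
    obtain ⟨S, hS, hvS⟩ : ∃ S, IsMaxStable G S ∧ v ∉ S := by simpa [core] using h.2.2
    have := hv _ (hS.insert_insert_deleteIncidenceSet hu)
    simp only [Finset.mem_insert] at this
    tauto
  · rintro (rfl | rfl | hv) S hS
    · exact hS.mem_of_forall_not_adj (not_adj_deleteIncidenceSet_of_pendant hu)
    · exact hS.mem_of_forall_not_adj not_adj_deleteIncidenceSet
    · exact Finset.mem_of_mem_erase (hv _ (hS.erase_of_deleteIncidenceSet hu))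

theorem anticore_deleteIncidenceSet : anticore (G.deleteIncidenceSet w) = anticore G \ {w} := by
  ext v
  simp only [anticore, Set.mem_sdiff, Set.mem_ofPred_eq, Set.mem_singleton_iff]
  refine ⟨fun hv => ⟨fun S hS hvS => hv _ (hS.insert_insert_deleteIncidenceSet hu)
    (Finset.mem_insert_of_mem (Finset.mem_insert_of_mem hvS)), ?_⟩, ?_⟩
  · rintro rfl
    obtain ⟨S, hS⟩ := exists_isMaxStable (G.deleteIncidenceSet v)
    exact hv S hS (hS.mem_of_forall_not_adj not_adj_deleteIncidenceSet)
  · rintro ⟨hv, hvw⟩ S hS hvS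
    exact hv _ (hS.erase_of_deleteIncidenceSet hu) (Finset.mem_erase.2 ⟨hvw, hvS⟩)

theorem mem_anticore_iff_mem_core_of_pendant : w ∈ anticore G ↔ u ∈ core G :=
  forall₂_congr fun _ hS => (hS.mem_iff_notMem_of_pendant hu).symm

theorem muNum_deleteIncidenceSet : muNum G = muNum (G.deleteIncidenceSet w) + 1 := by
  refine le_antisymm (muNum_le fun M hM => ?_) ?_
  · have := (hM.filter_notMem_deleteIncidenceSet w).card_le_muNum
    have := hM.card_filter_mem_le_one w
    have := Finset.card_filter_add_card_filter_not (s := M) (w ∈ ·)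
    omega
  · obtain ⟨M, hM, hcard⟩ := exists_isMatching_card_eq_muNum (G.deleteIncidenceSet w)
    have hdisj : ∀ f ∈ M, ∀ v ∈ s(u, w), v ∉ f := by
      intro f hf v hv
      rcases Sym2.mem_iff.1 hv with rfl | rfl
      exacts [notMem_of_mem_edgeSet (not_adj_deleteIncidenceSet_of_pendant hu) (hM.1 f hf),
        notMem_of_mem_edgeSet not_adj_deleteIncidenceSet (hM.1 f hf)]
    have huwM : s(u, w) ∉ M := fun h =>
      hdisj _ h w (Sym2.mem_mk_right u w) (Sym2.mem_mk_right u w)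
    have := ((hM.mono (G.deleteIncidenceSet_le w)).insert ((hu w).2 rfl) hdisj).card_le_muNum
    rwa [Finset.card_insert_of_notMem huwM, hcard] at this

theorem isAlphaCritical_pendant_iff : IsAlphaCritical G s(u, w) ↔ u ∉ core G := by
  have hiso : ∀ z, ¬(G.deleteEdges {s(u, w)}).Adj u z := fun z h => by
    obtain ⟨hG, hne⟩ := SimpleGraph.deleteEdges_adj.1 h
    exact hne ((hu z).1 hG ▸ rfl)
  refine ⟨fun ⟨_, hlt⟩ huc => ?_, fun huc => ⟨(hu w).2 rfl, ?_⟩⟩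
  · obtain ⟨S, hS⟩ := exists_isMaxStable (G.deleteEdges {s(u, w)})
    have hSu : u ∈ S := hS.mem_of_forall_not_adj hiso
    have hstable : IsStable G (S.erase u) :=
      hS.1.erase_of_deleteEdges fun e he => he ▸ Sym2.mem_mk_left u w
    have := hstable.card_le_alphaNum
    have hmax : IsMaxStable G (S.erase u) :=
      ⟨hstable, by rw [Finset.card_erase_of_mem hSu, hS.2] at this ⊢; omega⟩
    exact Finset.notMem_erase u S (huc _ hmax)
  · obtain ⟨S, hS, huS⟩ : ∃ S, IsMaxStable G S ∧ u ∉ S := by simpa [core] using huc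
    have hstable : IsStable (G.deleteEdges {s(u, w)}) (insert u S) :=
      isStable_insert.2 ⟨hS.1.anti (G.deleteEdges_le _), fun x _ => hiso x⟩
    have := hstable.card_le_alphaNum
    rw [Finset.card_insert_of_notMem huS, hS.2] at this
    omega

theorem not_isAlphaCritical_of_mem {e : Sym2 V} (hwe : w ∈ e) (he : e ≠ s(u, w)) :
    ¬IsAlphaCritical G e := by
  rintro ⟨-, hlt⟩
  have := alphaNum_deleteIncidenceSet (pendant_deleteEdges hu he)
  rw [deleteIncidenceSet_deleteEdges_of_mem hwe, alphaNum_deleteIncidenceSet hu] at this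
  omega

theorem isAlphaCritical_deleteIncidenceSet_iff {e : Sym2 V} (hwe : w ∉ e) :
    IsAlphaCritical (G.deleteIncidenceSet w) e ↔ IsAlphaCritical G e := by
  have he : e ≠ s(u, w) := by rintro rfl; exact hwe (Sym2.mem_mk_right u w)
  have h₁ := alphaNum_deleteIncidenceSet (pendant_deleteEdges hu he)
  rw [deleteIncidenceSet_deleteEdges] at h₁
  have h₂ := alphaNum_deleteIncidenceSet hu
  have hedge : e ∈ (G.deleteIncidenceSet w).edgeSet ↔ e ∈ G.edgeSet := by
    rw [SimpleGraph.edgeSet_deleteIncidenceSet]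
    exact ⟨fun h => h.1, fun h => ⟨h, fun h' => hwe h'.2⟩⟩
  exact and_congr hedge (by omega)

theorem isAlphaCritical_iff_of_pendant {e : Sym2 V} : IsAlphaCritical G e ↔
    e = s(u, w) ∧ u ∉ core G ∨ IsAlphaCritical (G.deleteIncidenceSet w) e := by
  by_cases hwe : w ∈ e
  · have : ¬IsAlphaCritical (G.deleteIncidenceSet w) e := fun h =>
      notMem_of_mem_edgeSet not_adj_deleteIncidenceSet h.1 hwe
    by_cases he : e = s(u, w)
    · subst he
      simp [this, isAlphaCritical_pendant_iff hu]
    · simp [he, this, not_isAlphaCritical_of_mem hu hwe he]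
  · have he : e ≠ s(u, w) := by rintro rfl; exact hwe (Sym2.mem_mk_right u w)
    simp [he, isAlphaCritical_deleteIncidenceSet_iff hu hwe]

theorem eta_deleteIncidenceSet_of_mem_core (huc : u ∈ core G) :
    eta G = eta (G.deleteIncidenceSet w) := by
  simp only [eta, isAlphaCritical_iff_of_pendant hu (G := G), huc, not_true_eq_false, and_false,
    false_or]

theorem eta_deleteIncidenceSet_of_notMem_core (huc : u ∉ core G) :
    eta G = eta (G.deleteIncidenceSet w) + 1 := by
  have : {e | IsAlphaCritical G e} =
      insert s(u, w) {e | IsAlphaCritical (G.deleteIncidenceSet w) e} := by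
    ext e
    simp [isAlphaCritical_iff_of_pendant hu, huc]
  rw [eta, eta, this, Set.ncard_insert_of_notMem fun h =>
    notMem_of_mem_edgeSet not_adj_deleteIncidenceSet h.1 (Sym2.mem_mk_right u w)]

theorem XiEtaSigmaIdentities.of_deleteIncidenceSet
    (ih : XiEtaSigmaIdentities (G.deleteIncidenceSet w)) : XiEtaSigmaIdentities G := by
  have hα := alphaNum_deleteIncidenceSet hu
  have hμ := muNum_deleteIncidenceSet hu
  have hwc := notMem_core_of_pendant hu
  have hanti := mem_anticore_iff_mem_core_of_pendant hu
  simp only [XiEtaSigmaIdentities, xi, sigmaNum_eq_ncard_anticore, core_deleteIncidenceSet hu,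
    anticore_deleteIncidenceSet hu] at ih ⊢
  by_cases huc : u ∈ core G
  · have hη := eta_deleteIncidenceSet_of_mem_core hu huc
    have hσ := Set.ncard_sdiff_singleton_add_one (hanti.2 huc)
    rw [Set.insert_eq_of_mem (Set.mem_insert_of_mem _ huc), Set.ncard_insert_of_notMem hwc] at ih
    omega
  · have hη := eta_deleteIncidenceSet_of_notMem_core hu huc
    have huc' : u ∉ insert w (core G) := by
      rw [Set.mem_insert_iff, not_or]
      exact ⟨((hu w).2 rfl).ne, huc⟩
    rw [Set.sdiff_singleton_eq_self (hanti.not.2 huc), Set.ncard_insert_of_notMem huc',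
      Set.ncard_insert_of_notMem hwc] at ih
    omega

end Pendant

theorem xiEtaSigmaIdentities_of_isAcyclic [Fintype V] {G : SimpleGraph V} (hG : G.IsAcyclic) :
    XiEtaSigmaIdentities G := by
  induction G using WellFoundedLT.induction with
  | ind G ih =>
    obtain rfl | hne := eq_or_ne G ⊥
    · rw [XiEtaSigmaIdentities, xi_bot, eta_bot, alphaNum_bot, sigmaNum_bot, muNum_bot]
      omega
    obtain ⟨u, w, hu⟩ := hG.exists_pendant hne
    exact .of_deleteIncidenceSet hu <| ih _ (deleteIncidenceSet_lt ((hu w).2 rfl))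
      (hG.anti (G.deleteIncidenceSet_le w))

/-- For every tree `T`: `ξ(T) + η(T) = α(T)`, `σ(T) + η(T) = μ(T)`, and
`ξ(T) + 2η(T) + σ(T) = |V(T)|`. -/
theorem stmt_19 {V : Type*} [Fintype V] (T : SimpleGraph V) (hT : T.IsTree) :
    xi T + eta T = alphaNum T ∧ sigmaNum T + eta T = muNum T ∧
      xi T + 2 * eta T + sigmaNum T = Fintype.card V :=
  xiEtaSigmaIdentities_of_isAcyclic hT.isAcyclic

end KEG
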